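/- arXiv:2402.08247 — 2 statements merged into one kernel-verified Lean document; each statement's English description precedes it below -/
import Mathlib

section
/- For any function Ψ : ℕ × 2^ℕ → {0,1}, if S is a measurable class of sets A such that for all n, A(n) = Ψ(n, A \ {n}), then S has Lebesgue measure zero. -/
open MeasureTheory

/-- A set (of any primcodable type) is computably enumerable. -/
def CE {α : Type*} [Primcodable α] (S : Set α) : Prop :=
  ∃ f : α →. ℕ, Partrec f ∧ S = f.Dom

/-- The `y`-th finite set in a canonical listing of all finite subsets of `ℕ`. -/
def Dfin (y : ℕ) : Set ℕ := ↑(Denumerable.ofNat (Finset ℕ) y)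

/-- Application of the enumeration operator with c.e. index set `W` to an oracle `X`. -/
def enumOp (W : Set ℕ) (X : Set ℕ) : Set ℕ :=
  {x | ∃ y, Nat.pair x y ∈ W ∧ Dfin y ⊆ X}

/-- Enumeration reducibility. -/
def EnumRed (A B : Set ℕ) : Prop := ∃ W : Set ℕ, CE W ∧ A = enumOp W B

/-- Enumeration equivalence. -/
def EnumEquiv (A B : Set ℕ) : Prop := EnumRed A B ∧ EnumRed B A

/-- Application of a hyper-enumeration operator with c.e. index set `W` to an oracle `X`. -/
def henumOp (W : Set ℕ) (X : Set ℕ) : Set ℕ :=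
  {x | ∀ f : List ℕ, ∃ n y,
    Nat.pair (Encodable.encode (f.take n)) (Nat.pair x y) ∈ W ∧ Dfin y ⊆ X}

/-- Hyper-enumeration reducibility. -/
def HypEnumRed (B A : Set ℕ) : Prop := ∃ W : Set ℕ, CE W ∧ B = henumOp W A

def Cototal (A : Set ℕ) : Prop := EnumRed A Aᶜ

def HypCototal (A : Set ℕ) : Prop := HypEnumRed A Aᶜ

def UnifIntroenum (X : Set ℕ) : Prop :=
  X.Infinite ∧ ∃ W : Set ℕ, CE W ∧ ∀ Y ⊆ X, Y.Infinite → enumOp W Y = X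

def Introenum (X : Set ℕ) : Prop :=
  X.Infinite ∧ ∀ Y ⊆ X, Y.Infinite → ∃ W : Set ℕ, CE W ∧ enumOp W Y = X

/-- View a point of Cantor space as a subset of `ℕ`. -/
def toSet (A : ℕ → Bool) : Set ℕ := {n | A n = true}

/-- Remove `n` from (the set coded by) `A`. -/
def drop (A : ℕ → Bool) (n : ℕ) : ℕ → Bool := fun m => if m = n then false else A m

/-- `A` is `Ψ`-autoreducible. -/
def AutoRed (Ψ : ℕ → (ℕ → Bool) → Bool) (A : ℕ → Bool) : Prop :=
  ∀ n, A n = Ψ n (drop A n)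

/-- The basic clopen cylinder of a finite binary string. -/
def cyl (σ : List Bool) : Set (ℕ → Bool) := {A | ∀ i : Fin σ.length, A i = σ.get i}

/-- `μ` is the uniform (fair-coin) measure on Cantor space: it gives each cylinder
of a string of length `k` measure `2⁻ᵏ`.  (This characterizes the measure uniquely.) -/
def IsCoinMeasure (μ : Measure (ℕ → Bool)) : Prop :=
  ∀ σ : List Bool, μ (cyl σ) = 2⁻¹ ^ σ.length

/-- The first `k` bits of `A`. -/
def res (A : ℕ → Bool) (k : ℕ) : List Bool := List.ofFn fun i : Fin k => A i

/-- A `Π⁰₂` class in Cantor space. -/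
def IsPi02 (C : Set (ℕ → Bool)) : Prop :=
  ∃ R : ℕ → List Bool → Bool, Computable (fun p : ℕ × List Bool => R p.1 p.2) ∧
    C = {A | ∀ m, ∃ k, R m (res A k) = true}

/-- A `Π⁰₃` class in Cantor space. -/
def IsPi03 (C : Set (ℕ → Bool)) : Prop :=
  ∃ R : ℕ → ℕ → List Bool → Bool,
    Computable (fun p : ℕ × ℕ × List Bool => R p.1 p.2.1 p.2.2) ∧
    C = {A | ∀ m, ∃ k, ∀ j, R m k (res A j) = true}

/-- The `m`-th level of the open test determined by the c.e. set `W` of pairs. -/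
def testSet (W : Set (ℕ × List Bool)) (m : ℕ) : Set (ℕ → Bool) :=
  ⋃ σ ∈ {σ | (m, σ) ∈ W}, cyl σ

/-- Martin-Löf randomness (with respect to a measure `μ` on Cantor space). -/
def MLRandom (μ : Measure (ℕ → Bool)) (A : ℕ → Bool) : Prop :=
  ∀ W : Set (ℕ × List Bool), CE W →
    (∀ m, μ (testSet W m) ≤ 2⁻¹ ^ m) → ∃ m, A ∉ testSet W m

/-- 2-randomness: passing all uniformly `Σ⁰₂` tests. -/
def TwoRandom (μ : Measure (ℕ → Bool)) (A : ℕ → Bool) : Prop :=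
  ∀ R : ℕ → ℕ → List Bool → Bool,
    Computable (fun p : ℕ × ℕ × List Bool => R p.1 p.2.1 p.2.2) →
    (∀ m, μ {A | ∃ k, ∀ j, R m k (res A j) = true} ≤ 2⁻¹ ^ m) →
    ∃ m, A ∉ {A | ∃ k, ∀ j, R m k (res A j) = true}

/-- Weak 2-randomness: avoiding every null `Π⁰₂` class. -/
def Weak2Random (μ : Measure (ℕ → Bool)) (A : ℕ → Bool) : Prop :=
  ∀ C : Set (ℕ → Bool), IsPi02 C → μ C = 0 → A ∉ C

/-- Weak 3-randomness: avoiding every null `Π⁰₃` class. -/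
def Weak3Random (μ : Measure (ℕ → Bool)) (A : ℕ → Bool) : Prop :=
  ∀ C : Set (ℕ → Bool), IsPi03 C → μ C = 0 → A ∉ C

/-!
Flipping bit `n` preserves the coin measure, and it turns every `Ψ`-autoreducible set into one
that is not `Ψ`-autoreducible, because `Ψ` only sees `A \ {n}`. A cylinder not depending on bit
`n` is invariant under this flip, so an autoreducible class fills at most half of every
finite-dimensional cylinder. These cylinders form an algebra generating the product σ-algebra,
hence approximate the class in measure, and a set of positive measure cannot have relative
measure `≤ 1/2` in sets approximating it.
-/

open scoped symmDiff ENNReal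

namespace MeasureTheory

variable {α : Type*} [MeasurableSpace α] {μ : Measure α}

theorem two_mul_measure_inter_le_of_disjoint_preimage {T : α → α}
    (hT : MeasurePreserving T μ μ) {S X : Set α} (hS : NullMeasurableSet S μ)
    (hdisj : Disjoint S (T ⁻¹' S)) (hXm : MeasurableSet X) (hX : T ⁻¹' X = X) :
    2 * μ (S ∩ X) ≤ μ X := by
  set Y := S ∩ X
  have hYm : NullMeasurableSet Y μ := hS.inter hXm.nullMeasurableSet
  have hTY : T ⁻¹' Y = T ⁻¹' S ∩ X := by rw [Set.preimage_inter, hX]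
  have hYdisj : Disjoint Y (T ⁻¹' Y) :=
    hTY ▸ hdisj.mono Set.inter_subset_left Set.inter_subset_left
  calc 2 * μ Y = μ Y + μ (T ⁻¹' Y) := by rw [hT.measure_preimage hYm, two_mul]
    _ = μ (Y ∪ T ⁻¹' Y) :=
      (measure_union₀ (hYm.preimage hT.quasiMeasurePreserving) hYdisj.aedisjoint).symm
    _ ≤ μ X := measure_mono <|
      Set.union_subset Set.inter_subset_right (hTY ▸ Set.inter_subset_right)

theorem measure_le_three_mul_measure_symmDiff {T X : Set α} (hT : μ T ≠ ∞)
    (hhalf : 2 * μ (T ∩ X) ≤ μ X) :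
    μ T ≤ 3 * μ (T ∆ X) := by
  have hTX : μ T ≤ μ (T ∩ X) + μ (T ∆ X) :=
    (measure_le_inter_add_sdiff μ T X).trans <| by
      gcongr; exact (show T \ X ⊆ T ∆ X from le_sup_left)
  have hXT : μ X ≤ μ T + μ (T ∆ X) := by
    rw [add_comm, symmDiff_comm]
    exact (measure_mono (le_symmDiff_sup_right X T)).trans (measure_union_le _ _)
  have : μ T + μ T ≤ μ T + 3 * μ (T ∆ X) :=
    calc μ T + μ T ≤ 2 * μ (T ∩ X) + 2 * μ (T ∆ X) := by rw [← two_mul, ← mul_add]; gcongr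
      _ ≤ μ T + μ (T ∆ X) + 2 * μ (T ∆ X) := by gcongr; exact hhalf.trans hXT
      _ = μ T + 3 * μ (T ∆ X) := by ring
  exact (ENNReal.add_le_add_iff_left hT).1 this

theorem measure_eq_zero_of_two_mul_measure_inter_le [IsFiniteMeasure μ] {𝒜 : Set (Set α)}
    (h𝒜 : IsSetAlgebra 𝒜) (hgen : ‹MeasurableSpace α› = MeasurableSpace.generateFrom 𝒜)
    {S : Set α} (hS : NullMeasurableSet S μ) (hhalf : ∀ X ∈ 𝒜, 2 * μ (S ∩ X) ≤ μ X) :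
    μ S = 0 := by
  obtain ⟨T, -, hTm, hTS⟩ := hS.exists_measurable_superset_ae_eq
  have hdense := Measure.MeasureDense.of_generateFrom_isSetAlgebra_finite (μ := μ) h𝒜 hgen
  rw [← measure_congr hTS, ← nonpos_iff_eq_zero]
  refine ENNReal.le_of_forall_pos_le_add fun ε hε _ => ?_
  obtain ⟨X, hX, hXT⟩ := hdense.approx T hTm (measure_ne_top μ T) (ε / 3) (by positivity)
  have hhalfT : 2 * μ (T ∩ X) ≤ μ X := by
    rw [measure_congr (hTS.inter (ae_eq_refl X))]; exact hhalf X hX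
  calc μ T ≤ 3 * μ (T ∆ X) := measure_le_three_mul_measure_symmDiff (measure_ne_top μ T) hhalfT
    _ ≤ 3 * ENNReal.ofReal (ε / 3) := by gcongr
    _ = 0 + ε := by
      rw [← ENNReal.ofReal_ofNat 3, ← ENNReal.ofReal_mul (by norm_num), zero_add,
        mul_div_cancel₀ _ (by norm_num), ENNReal.ofReal_coe_nnreal]

end MeasureTheory

theorem mem_cyl_iff {σ : List Bool} {A : ℕ → Bool} :
    A ∈ cyl σ ↔ ∀ (i : ℕ) (h : i < σ.length), A i = σ[i] := by
  simp [cyl, Fin.forall_iff]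

theorem mem_cyl_ofFn {k : ℕ} {τ : Fin k → Bool} {A : ℕ → Bool} :
    A ∈ cyl (List.ofFn τ) ↔ ∀ i : Fin k, A i = τ i := by
  simp [mem_cyl_iff, Fin.forall_iff]

theorem measurableSet_cyl (σ : List Bool) : MeasurableSet (cyl σ) := by
  simp only [cyl, Set.ofPred_forall]
  exact MeasurableSet.iInter fun i => measurableSet_eq_fun (measurable_pi_apply _) measurable_const

theorem cyl_subset_of_length_le {σ τ : List Bool} (hlen : σ.length ≤ τ.length)
    (hne : (cyl σ ∩ cyl τ).Nonempty) : cyl τ ⊆ cyl σ := by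
  obtain ⟨A, hAσ, hAτ⟩ := hne
  intro B hB
  rw [mem_cyl_iff] at *
  intro i hi
  rw [hB i (hi.trans_le hlen), ← hAτ i _, hAσ i hi]

theorem isPiSystem_range_cyl : IsPiSystem (Set.range cyl) := by
  rintro _ ⟨σ, rfl⟩ _ ⟨τ, rfl⟩ hne
  rcases le_total σ.length τ.length with h | h
  · exact ⟨τ, (Set.inter_eq_right.2 (cyl_subset_of_length_le h hne)).symm⟩
  · exact ⟨σ, (Set.inter_eq_left.2 (cyl_subset_of_length_le h (Set.inter_comm _ _ ▸ hne))).symm⟩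

theorem generateFrom_range_cyl :
    MeasurableSpace.generateFrom (Set.range cyl) = MeasurableSpace.pi := by
  refine le_antisymm (MeasurableSpace.generateFrom_le ?_) (iSup_le fun i => ?_)
  · rintro _ ⟨σ, rfl⟩
    exact measurableSet_cyl σ
  · refine Measurable.comap_le <|
      @measurable_to_countable' _ _ _ _ (MeasurableSpace.generateFrom (Set.range cyl)) _ fun b => ?_
    have : (fun A : ℕ → Bool => A i) ⁻¹' {b} =
        ⋃ τ ∈ {τ : Fin (i + 1) → Bool | τ (Fin.last i) = b}, cyl (List.ofFn τ) := by
      ext A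
      simp only [Set.mem_preimage, Set.mem_singleton_iff, Set.mem_iUnion, mem_cyl_ofFn]
      exact ⟨fun h => ⟨fun j => A j, h, fun _ => rfl⟩, fun ⟨τ, hτ, hA⟩ => hτ ▸ hA (Fin.last i)⟩
    rw [this]
    exact .biUnion (Set.to_countable _) fun τ _ => .basic _ ⟨_, rfl⟩

section CoinMeasure

variable {μ ν : Measure (ℕ → Bool)}

theorem IsCoinMeasure.isProbabilityMeasure (hμ : IsCoinMeasure μ) : IsProbabilityMeasure μ := by
  have : cyl [] = Set.univ := Set.eq_univ_of_forall fun A => mem_cyl_iff.2 (by simp)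
  exact ⟨by simpa [this] using hμ []⟩

theorem IsCoinMeasure.unique (hμ : IsCoinMeasure μ) (hν : IsCoinMeasure ν) : μ = ν := by
  have := hμ.isProbabilityMeasure
  have := hν.isProbabilityMeasure
  refine ext_of_generate_finite _ generateFrom_range_cyl.symm isPiSystem_range_cyl ?_ (by simp)
  rintro _ ⟨σ, rfl⟩
  rw [hμ, hν]

def flipBit (n : ℕ) (A : ℕ → Bool) : ℕ → Bool := Function.update A n (!A n)

theorem measurable_flipBit (n : ℕ) : Measurable (flipBit n) := by
  unfold flipBit; fun_prop

theorem preimage_flipBit_cyl (n : ℕ) (σ : List Bool) :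
    flipBit n ⁻¹' cyl σ = cyl (σ.modify n not) := by
  ext A
  simp only [Set.mem_preimage, mem_cyl_iff, List.length_modify, List.getElem_modify, flipBit,
    Function.update_apply]
  refine forall₂_congr fun i hi => ?_
  by_cases h : i = n
  · subst h; simp [Bool.not_eq_eq_eq_not]
  · simp [h, Ne.symm h]

theorem IsCoinMeasure.map_flipBit (hμ : IsCoinMeasure μ) (n : ℕ) :
    IsCoinMeasure (μ.map (flipBit n)) := fun σ => by
  rw [Measure.map_apply (measurable_flipBit n) (measurableSet_cyl σ), preimage_flipBit_cyl, hμ,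
    List.length_modify]

theorem IsCoinMeasure.measurePreserving_flipBit (hμ : IsCoinMeasure μ)
    (n : ℕ) : MeasurePreserving (flipBit n) μ μ :=
  ⟨measurable_flipBit n, (hμ.map_flipBit n).unique hμ⟩

end CoinMeasure

theorem preimage_flipBit_cylinder {s : Finset ℕ} {n : ℕ} (hn : n ∉ s) (E : Set (s → Bool)) :
    flipBit n ⁻¹' cylinder s E = cylinder s E := by
  ext A
  have : s.restrict (flipBit n A) = s.restrict A := by
    ext ⟨i, hi⟩
    simp [flipBit, show i ≠ n from fun h => hn (h ▸ hi)]
  simp only [Set.mem_preimage, mem_cylinder, this]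

theorem AutoRed.not_flipBit {Ψ : ℕ → (ℕ → Bool) → Bool} {A : ℕ → Bool} (hA : AutoRed Ψ A)
    (n : ℕ) : ¬ AutoRed Ψ (flipBit n A) := fun hA' => by
  have hdrop : drop (flipBit n A) n = drop A n := by
    funext m; by_cases h : m = n <;> simp [drop, flipBit, h]
  have := hA' n
  rw [hdrop, ← hA n] at this
  simp [flipBit] at this

/-- Any measurable class of `Ψ`-autoreducible sets has measure zero. -/
theorem stmt_0 (μ : Measure (ℕ → Bool)) (hμ : IsCoinMeasure μ)
    (Ψ : ℕ → (ℕ → Bool) → Bool) (S : Set (ℕ → Bool))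
    (hS : NullMeasurableSet S μ) (hauto : ∀ A ∈ S, AutoRed Ψ A) :
    μ S = 0 := by
  have := hμ.isProbabilityMeasure
  refine measure_eq_zero_of_two_mul_measure_inter_le isSetAlgebra_measurableCylinders
    generateFrom_measurableCylinders.symm hS fun X hX => ?_
  obtain ⟨s, E, hE, rfl⟩ := (mem_measurableCylinders X).1 hX
  obtain ⟨n, hn⟩ := Infinite.exists_notMem_finset s
  have hdisj : Disjoint S (flipBit n ⁻¹' S) :=
    Set.disjoint_left.2 fun A hA hA' => (hauto A hA).not_flipBit n (hauto _ hA')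
  exact two_mul_measure_inter_le_of_disjoint_preimage (hμ.measurePreserving_flipBit n) hS hdisj
    hE.cylinder (preimage_flipBit_cylinder hn E)
end

section
/- There exists a non-measurable class S₀ of subsets of ℕ and a function Ψ₀ : ℕ × 2^ℕ → {0,1} such that every element of S₀ is Ψ₀-autoreducible. -/
open MeasureTheory

/-!
Let `T` pick one representative from each class of equality modulo finitely many bits. Flipping
the bits of a finite set preserves the coin measure, and the translates of `T` under the countably
many such flips partition Cantor space; as in Vitali's construction, `T` can therefore be neither
null nor of positive measure. Two members of `T` never differ in exactly one bit, so `A n` is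
recovered from `drop A n` as the `n`-th bit of the unique member of `T` that agrees with it off `n`.
-/

open Filter
open scoped symmDiff

namespace PiNat

variable {E : ℕ → Type*}

theorem isPiSystem_cylinders : IsPiSystem {s : Set (∀ n, E n) | ∃ x n, s = cylinder x n} := by
  rintro _ ⟨x, n, rfl⟩ _ ⟨x', m, rfl⟩ ⟨y, hyx, hyx'⟩
  rw [← mem_cylinder_iff_eq.1 hyx, ← mem_cylinder_iff_eq.1 hyx']
  refine ⟨y, max n m, ?_⟩
  rcases le_total n m with h | h
  · rw [max_eq_right h, Set.inter_eq_right.2 (cylinder_anti y h)]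
  · rw [max_eq_left h, Set.inter_eq_left.2 (cylinder_anti y h)]

variable [∀ n, TopologicalSpace (E n)] [∀ n, DiscreteTopology (E n)] [∀ n, Countable (E n)]

theorem borel_eq_generateFrom_cylinders :
    borel (∀ n, E n) = .generateFrom {s | ∃ x n, s = cylinder x n} :=
  borel_eq_generateFrom_of_subbasis (isTopologicalBasis_cylinders E).eq_generateFrom

theorem measure_ext_of_cylinder [∀ n, MeasurableSpace (E n)] [∀ n, BorelSpace (E n)]
    {μ ν : Measure (∀ n, E n)} [IsFiniteMeasure μ]
    (h : ∀ x n, μ (cylinder x n) = ν (cylinder x n)) : μ = ν := by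
  refine ext_of_generate_finite _ ?_ isPiSystem_cylinders ?_ ?_
  · rw [← borel_eq_generateFrom_cylinders]
    exact BorelSpace.measurable_eq
  · rintro _ ⟨x, n, rfl⟩
    exact h x n
  · rcases isEmpty_or_nonempty (∀ n, E n) with hE | ⟨⟨x⟩⟩
    · simp [Set.univ_eq_empty_iff.2 hE]
    · simpa [cylinder_zero] using h x 0

end PiNat

theorem cyl_res (A : ℕ → Bool) (n : ℕ) : cyl (res A n) = PiNat.cylinder A n := by
  ext B
  simp [cyl, res, PiNat.mem_cylinder_iff, Fin.forall_iff]

namespace IsCoinMeasure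

variable {μ : Measure (ℕ → Bool)}

theorem measure_cylinder (hμ : IsCoinMeasure μ) (A : ℕ → Bool) (n : ℕ) :
    μ (PiNat.cylinder A n) = 2⁻¹ ^ n := by
  rw [← cyl_res, hμ, res, List.length_ofFn]

theorem isProbabilityMeasure_s1 (hμ : IsCoinMeasure μ) : IsProbabilityMeasure μ :=
  ⟨by simpa [PiNat.cylinder_zero] using hμ.measure_cylinder (fun _ => false) 0⟩

theorem measurePreserving_symmDiff (hμ : IsCoinMeasure μ) (c : ℕ → Bool) :
    MeasurePreserving (c ∆ ·) μ μ := by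
  have hmeas : Measurable (c ∆ · : (ℕ → Bool) → ℕ → Bool) :=
    measurable_pi_lambda _ fun n => (measurable_from_top (f := (c n ∆ ·))).comp
      (measurable_pi_apply n)
  have := hμ.isProbabilityMeasure_s1
  refine ⟨hmeas, PiNat.measure_ext_of_cylinder fun A n => ?_⟩
  have hpre : (c ∆ ·) ⁻¹' PiNat.cylinder A n = PiNat.cylinder (c ∆ A) n := by
    ext B
    simp only [Set.mem_preimage, PiNat.mem_cylinder_iff, Pi.symmDiff_apply, Bool.symmDiff_eq_xor]
    refine forall₂_congr fun i _ => ?_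
    cases c i <;> cases A i <;> cases B i <;> decide
  rw [Measure.map_apply hmeas (PiNat.isOpen_cylinder _ A n).measurableSet, hpre,
    hμ.measure_cylinder, hμ.measure_cylinder]

end IsCoinMeasure

theorem MeasureTheory.not_nullMeasurableSet_of_iUnion_preimage_eq_univ {α ι : Type*}
    [MeasurableSpace α] [Countable ι] [Infinite ι] {μ : Measure α} [IsFiniteMeasure μ] [NeZero μ]
    {f : ι → α → α} (hf : ∀ i, MeasurePreserving (f i) μ μ) {T : Set α}
    (hdisj : Pairwise fun i j => Disjoint (f i ⁻¹' T) (f j ⁻¹' T))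
    (hcover : ⋃ i, f i ⁻¹' T = Set.univ) :
    ¬ NullMeasurableSet T μ := by
  intro hT
  have hsum : μ Set.univ = ∑' _ : ι, μ T := by
    rw [← hcover, measure_iUnion₀ (fun i j hij => (hdisj hij).aedisjoint)
      fun i => hT.preimage (hf i).quasiMeasurePreserving]
    exact tsum_congr fun i => (hf i).measure_preimage hT
  rcases eq_or_ne (μ T) 0 with h0 | h0
  · exact NeZero.ne μ (Measure.measure_univ_eq_zero.1 (by simpa [h0] using hsum))
  · exact measure_ne_top μ Set.univ (by rwa [ENNReal.tsum_const_eq_top_of_ne_zero h0] at hsum)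

theorem Quotient.eq_of_mem_range_out {α : Type*} {s : Setoid α} {a b : α}
    (ha : a ∈ Set.range (Quotient.out : Quotient s → α))
    (hb : b ∈ Set.range (Quotient.out : Quotient s → α)) (h : a ≈ b) : a = b := by
  obtain ⟨p, rfl⟩ := ha
  obtain ⟨q, rfl⟩ := hb
  rw [Quotient.out_equiv_out.1 h]

theorem exists_autoRed_of_injOn_drop {S : Set (ℕ → Bool)} (hS : ∀ n, S.InjOn (drop · n)) :
    ∃ Ψ, ∀ A ∈ S, AutoRed Ψ A := by
  classical
  refine ⟨fun n B => if h : ∃ A ∈ S, drop A n = B then h.choose n else false, fun A hA n => ?_⟩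
  have h : ∃ A' ∈ S, drop A' n = drop A n := ⟨A, hA, rfl⟩
  dsimp only
  rw [dif_pos h, hS n h.choose_spec.1 hA h.choose_spec.2]

theorem eventuallyEq_cofinite_of_drop_eq {A B : ℕ → Bool} {n : ℕ} (h : drop A n = drop B n) :
    A =ᶠ[cofinite] B :=
  eventually_cofinite.2 <| (Set.finite_singleton n).subset fun m hm => by
    by_contra! hmn
    rw [Set.mem_singleton_iff] at hmn
    exact hm (by simpa only [drop, if_neg hmn] using congrFun h m)

def finsetMask (s : Finset ℕ) : ℕ → Bool := fun n => decide (n ∈ s)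

theorem finsetMask_injective : Function.Injective finsetMask := fun s t h =>
  Finset.ext fun n => by simpa [finsetMask] using congrFun h n

theorem eventuallyEq_cofinite_iff_exists_finsetMask {A B : ℕ → Bool} :
    A =ᶠ[cofinite] B ↔ ∃ s, finsetMask s ∆ A = B := by
  constructor
  · intro h
    refine ⟨(eventually_cofinite.1 h).toFinset, funext fun n => ?_⟩
    by_cases hn : A n = B n
    · simp [finsetMask, hn]
    · simpa [finsetMask, hn] using Bool.eq_not.2 hn
  · rintro ⟨s, rfl⟩
    refine eventually_cofinite.2 (s.finite_toSet.subset fun n hn => ?_)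
    by_contra hns
    simp_all [finsetMask]

def cofiniteTransversal : Set (ℕ → Bool) :=
  Set.range (Quotient.out : Germ cofinite Bool → ℕ → Bool)

theorem cofiniteTransversal_injOn_drop (n : ℕ) : cofiniteTransversal.InjOn (drop · n) :=
  fun _ hA _ hB h => Quotient.eq_of_mem_range_out hA hB (eventuallyEq_cofinite_of_drop_eq h)

theorem IsCoinMeasure.not_nullMeasurableSet_cofiniteTransversal {μ : Measure (ℕ → Bool)}
    (hμ : IsCoinMeasure μ) : ¬ NullMeasurableSet cofiniteTransversal μ := by
  have := hμ.isProbabilityMeasure_s1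
  refine not_nullMeasurableSet_of_iUnion_preimage_eq_univ (f := fun s => (finsetMask s ∆ ·))
    (fun s => hμ.measurePreserving_symmDiff _) (fun s t hst => ?_) ?_
  · refine Set.disjoint_left.2 fun A hs ht => hst (finsetMask_injective ?_)
    have hsA : A =ᶠ[cofinite] finsetMask s ∆ A :=
      eventuallyEq_cofinite_iff_exists_finsetMask.2 ⟨s, rfl⟩
    have htA : A =ᶠ[cofinite] finsetMask t ∆ A :=
      eventuallyEq_cofinite_iff_exists_finsetMask.2 ⟨t, rfl⟩
    exact symmDiff_left_injective A (Quotient.eq_of_mem_range_out hs ht (hsA.symm.trans htA))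
  · refine Set.eq_univ_of_forall fun A => Set.mem_iUnion.2 ?_
    have hA : (Quotient.mk (germSetoid cofinite Bool) A).out =ᶠ[cofinite] A :=
      Quotient.mk_out (s := germSetoid cofinite Bool) A
    obtain ⟨s, hs⟩ := eventuallyEq_cofinite_iff_exists_finsetMask.1 hA.symm
    exact ⟨s, Set.mem_preimage.2 (hs ▸ Set.mem_range_self _)⟩

/-- There is a non-measurable class all of whose members are `Ψ₀`-autoreducible. -/
theorem stmt_1 (μ : Measure (ℕ → Bool)) (hμ : IsCoinMeasure μ) :
    ∃ (S₀ : Set (ℕ → Bool)) (Ψ₀ : ℕ → (ℕ → Bool) → Bool),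
      ¬ NullMeasurableSet S₀ μ ∧ ∀ A ∈ S₀, AutoRed Ψ₀ A := by
  obtain ⟨Ψ, hΨ⟩ := exists_autoRed_of_injOn_drop cofiniteTransversal_injOn_drop
  exact ⟨cofiniteTransversal, Ψ, hμ.not_nullMeasurableSet_cofiniteTransversal, hΨ⟩
end
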